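/- For all integers s ≥ 1 and d ≥ 2, the exponential bound ť_s^{(d)} ≤ (3/4)^{d−2} · t_{s−1} holds. -/

import Mathlib

/-- `t_k = (2k)!/(k!(k+1)!)`, the `k`-th Catalan number, as a real number. -/
noncomputable def tReal (k : ℕ) : ℝ :=
  (Nat.factorial (2 * k) : ℝ) / ((Nat.factorial k : ℝ) * (Nat.factorial (k + 1) : ℝ))

/-- `ť_s^{(d)} = Σ_{l₁+⋯+l_d = s−d} t_{l₁}⋯t_{l_d}`, the number of plane rooted trees with
`s` edges whose root has exit degree `d`; it is `0` when `d = 0` or `d > s`. -/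
noncomputable def tcheck (s d : ℕ) : ℝ :=
  if d = 0 ∨ s < d then 0
  else ∑ l ∈ Finset.Nat.antidiagonalTuple d (s - d), ∏ i, tReal (l i)

/-!
`ť_s^{(d)}` is the coefficient of `x^(s-d)` in `C(x)^d`, where `C` is the Catalan generating
function. Since `x C² = C - 1`, the case `d = 2` is an equality with `t_{s-1}`. Each further
factor `C` convolves with the Catalan numbers, and a truncated convolution
`Σ_{k ≤ m} t_k t_{n-k}` with `m < n` misses the term `t_n t_0` of `t_{n+1} = Σ_{k ≤ n} t_k t_{n-k}`,
so it is at most `t_{n+1} - t_n ≤ (3/4) t_{n+1}`, because `t_{n+1} ≤ 4 t_n`.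
-/

open Finset PowerSeries Nat

theorem catalan_mul_factorial_mul_factorial_succ (k : ℕ) :
    catalan k * k ! * (k + 1)! = (2 * k)! := by
  have h := choose_mul_factorial_mul_factorial (n := 2 * k) (k := k) (by omega)
  rw [show 2 * k - k = k by omega, ← centralBinom_eq_two_mul_choose,
    ← succ_mul_catalan_eq_centralBinom] at h
  rw [← h, factorial_succ]
  ring

theorem tReal_eq_catalan (k : ℕ) : tReal k = catalan k := by
  rw [tReal, div_eq_iff (by positivity), ← catalan_mul_factorial_mul_factorial_succ]
  push_cast
  ring

theorem succ_succ_mul_catalan_succ (n : ℕ) :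
    (n + 2) * catalan (n + 1) = 2 * (2 * n + 1) * catalan n := by
  have h := succ_mul_centralBinom_succ n
  rw [← succ_mul_catalan_eq_centralBinom, ← succ_mul_catalan_eq_centralBinom] at h
  refine Nat.eq_of_mul_eq_mul_left n.succ_pos ?_
  linarith

theorem catalan_succ_le_four_mul (n : ℕ) : catalan (n + 1) ≤ 4 * catalan n := by
  have h := succ_succ_mul_catalan_succ n
  refine le_of_mul_le_mul_left (a := n + 2) ?_ (by omega)
  nlinarith

theorem PowerSeries.coeff_pow_eq_sum_antidiagonalTuple {R : Type*} [CommSemiring R]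
    (f : R⟦X⟧) (d n : ℕ) :
    coeff n (f ^ d) = ∑ l ∈ Nat.antidiagonalTuple d n, ∏ i, coeff (l i) f := by
  rw [← Fin.prod_const, coeff_prod, finsuppAntidiag, sum_map,
    ← piAntidiag_univ_fin_eq_antidiagonalTuple]
  exact sum_attach _ fun l : Fin d → ℕ ↦ ∏ i, coeff (l i) f

theorem coeff_catalanSeries_sq (m : ℕ) : coeff m (catalanSeries ^ 2) = catalan (m + 1) := by
  simpa [coeff_succ_mul_X, catalanSeries_coeff] using
    congrArg (coeff (m + 1)) catalanSeries_sq_mul_X_add_one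

theorem four_mul_sum_range_catalan_mul_catalan_le {m n : ℕ} (hmn : m < n) :
    4 * ∑ k ∈ range (m + 1), catalan k * catalan (n - k) ≤ 3 * catalan (n + 1) := by
  have hrec : catalan (n + 1) = ∑ k ∈ range n, catalan k * catalan (n - k) + catalan n := by
    rw [catalan_succ', Nat.sum_antidiagonal_eq_sum_range_succ_mk, sum_range_succ]
    simp [catalan_zero]
  have hsub : ∑ k ∈ range (m + 1), catalan k * catalan (n - k) ≤
      ∑ k ∈ range n, catalan k * catalan (n - k) :=
    sum_le_sum_of_subset (range_subset_range.2 hmn)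
  have := catalan_succ_le_four_mul n
  omega

theorem four_pow_mul_coeff_catalanSeries_pow_le (e m : ℕ) :
    4 ^ e * coeff m (catalanSeries ^ (e + 2)) ≤ 3 ^ e * catalan (m + e + 1) := by
  induction e generalizing m with
  | zero => simp [coeff_catalanSeries_sq]
  | succ e ih =>
    calc 4 ^ (e + 1) * coeff m (catalanSeries ^ (e + 1 + 2))
        = 4 * ∑ k ∈ range (m + 1),
            catalan k * (4 ^ e * coeff (m - k) (catalanSeries ^ (e + 2))) := by
          rw [pow_succ' catalanSeries, coeff_mul, Nat.sum_antidiagonal_eq_sum_range_succ_mk,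
            mul_sum, mul_sum]
          refine sum_congr rfl fun k _ ↦ ?_
          rw [catalanSeries_coeff]
          ring
      _ ≤ 4 * ∑ k ∈ range (m + 1), catalan k * (3 ^ e * catalan (m - k + e + 1)) := by
          gcongr 4 * ∑ k ∈ _, _ * ?_ with k; exact ih _
      _ = 3 ^ e * (4 * ∑ k ∈ range (m + 1), catalan k * catalan (m + e + 1 - k)) := by
          rw [mul_sum, mul_sum, mul_sum]
          refine sum_congr rfl fun k hk ↦ ?_
          rw [show m - k + e + 1 = m + e + 1 - k by grind]
          ring
      _ ≤ 3 ^ e * (3 * catalan (m + e + 2)) :=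
          Nat.mul_le_mul_left _ (four_mul_sum_range_catalan_mul_catalan_le (by omega))
      _ = 3 ^ (e + 1) * catalan (m + e + 2) := by ring

theorem coeff_catalanSeries_pow_le (e m : ℕ) :
    ((coeff m (catalanSeries ^ (e + 2)) : ℕ) : ℝ) ≤ (3 / 4) ^ e * catalan (m + e + 1) := by
  rw [div_pow, div_mul_eq_mul_div, le_div_iff₀ (by positivity), mul_comm]
  exact_mod_cast four_pow_mul_coeff_catalanSeries_pow_le e m

theorem tcheck_eq_coeff_catalanSeries_pow {s d : ℕ} (hd : d ≠ 0) (hds : d ≤ s) :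
    tcheck s d = (coeff (s - d) (catalanSeries ^ d) : ℕ) := by
  rw [tcheck, if_neg (by omega), coeff_pow_eq_sum_antidiagonalTuple]
  push_cast
  simp only [tReal_eq_catalan, catalanSeries_coeff]

theorem tcheck_exponential_bound_general (s d : ℕ) (hd : 2 ≤ d) :
    tcheck s d ≤ (3 / 4 : ℝ) ^ (d - 2) * tReal (s - 1) := by
  rw [tReal_eq_catalan]
  rcases lt_or_ge s d with hsd | hds
  · rw [tcheck, if_pos (Or.inr hsd)]
    positivity
  obtain ⟨e, rfl⟩ : ∃ e, d = e + 2 := ⟨d - 2, by omega⟩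
  obtain ⟨m, rfl⟩ : ∃ m, s = m + (e + 2) := ⟨s - (e + 2), by omega⟩
  rw [tcheck_eq_coeff_catalanSeries_pow (by omega) hds, Nat.add_sub_cancel, Nat.add_sub_cancel,
    show m + (e + 2) - 1 = m + e + 1 by omega]
  exact coeff_catalanSeries_pow_le e m

/-- For all `s ≥ 1` and `d ≥ 2`, `ť_s^{(d)} ≤ (3/4)^{d−2} · t_{s−1}`. -/
theorem tcheck_exponential_bound (s d : ℕ) (hs : 1 ≤ s) (hd : 2 ≤ d) :
    tcheck s d ≤ (3 / 4 : ℝ) ^ (d - 2) * tReal (s - 1) :=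
  tcheck_exponential_bound_general s d hd
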